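/- Let t ∈ 𝔫, d ∈ 𝔤, and c ∈ ℂ satisfy ⁅d, t⁆ = c·t, let p ∈ ℂ[X], and set q(X) = p(X − c) − p(X). Then in M_η one has ι(t)·[p(ι(d))] − η(t)·[p(ι(d))] = η(t)·[q(ι(d))]; in particular this element is 0 whenever η(t) = 0. Moreover, if 𝔤 = 𝔞 ⊕ 𝔫 is an internal direct sum of subspaces for some Lie subalgebra 𝔞 of 𝔤 with d ∈ 𝔞, and if η(t) ≠ 0, c ≠ 0, and p is nonconstant, then ι(t)·[p(ι(d))] − η(t)·[p(ι(d))] ≠ 0. -/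

import Mathlib

open UniversalEnvelopingAlgebra Polynomial

attribute [local instance 100] LieRing.ofAssociativeRing

/-- The left ideal of `U(L)` generated by `{ι x - η x • 1 : x ∈ N}`. -/
noncomputable def whittakerIdeal (L : Type*) [LieRing L] [LieAlgebra ℂ L]
    (N : LieSubalgebra ℂ L) (η : N →ₗ⁅ℂ⁆ ℂ) :
    Submodule (UniversalEnvelopingAlgebra ℂ L) (UniversalEnvelopingAlgebra ℂ L) :=
  Submodule.span (UniversalEnvelopingAlgebra ℂ L)
    {a | ∃ x : N, a = ι ℂ (x : L) - algebraMap ℂ (UniversalEnvelopingAlgebra ℂ L) (η x)}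

/-! Since `⁅d, t⁆ = c • t`, one has `t * p(d) = p(d - c) * t` in `U(𝔤)`, and `t` acts on the
Whittaker vector `[1]` by `η t`; this gives the identity. For the non-vanishing, the polynomials
`r` with `r(d) ∈ I_η` form a subspace stable under `r ↦ r(X - c)` when `η t ≠ 0`. As `c ≠ 0`,
`r(X - c) - r` is nonzero of smaller degree for nonconstant `r`, so a nonzero member would force
`1 ∈ I_η`. This is impossible when `𝔤 = 𝔞 ⊕ 𝔫`: `U(𝔞)` carries a `𝔤`-module structure in which
`1` is a Whittaker vector of type `η`, so `I_η` annihilates `1 ∈ U(𝔞)`. -/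

namespace Polynomial

variable {K : Type*} [Field K] [CharZero K]

theorem comp_X_sub_C_ne_self {c : K} (hc : c ≠ 0) {r : K[X]} (hr : 0 < r.natDegree) :
    r.comp (X - C c) ≠ r := by
  intro hr_eq
  have hperiodic : Function.Periodic (fun x => r.eval x) (-c) := fun x => by
    simpa [sub_eq_add_neg] using congrArg (eval x) hr_eq
  have hconst : r = C (r.eval 0) := by
    refine eq_of_infinite_eval_eq _ _ (Set.infinite_of_injective_forall_mem
      (f := fun n : ℕ => n * -c) ?_ fun n => ?_)
    · exact (mul_left_injective₀ (neg_ne_zero.mpr hc)).comp Nat.cast_injective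
    · simpa using hperiodic.nat_mul_eq n
  rw [hconst, natDegree_C] at hr
  exact hr.false

theorem natDegree_comp_X_sub_C_sub_lt {R : Type*} [CommRing R] (c : R) {r : R[X]}
    (hr : 0 < r.natDegree) : (r.comp (X - C c) - r).natDegree < r.natDegree := by
  have htaylor : r.comp (X - C c) = taylor (-c) r := by
    rw [taylor_apply, C_neg, sub_eq_add_neg]
  have hr0 : taylor (-c) r ≠ 0 := by
    rw [Ne, taylor_eq_zero]
    rintro rfl
    simp at hr
  by_cases h0 : r.comp (X - C c) - r = 0
  · rwa [h0, natDegree_zero]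
  refine natDegree_lt_natDegree h0 ?_
  rw [htaylor, ← degree_taylor r (-c)]
  exact degree_sub_lt_left (degree_taylor r _) hr0 (leadingCoeff_taylor _ _)

theorem one_mem_of_forall_comp_X_sub_C_mem {c : K} (hc : c ≠ 0) (J : Submodule K K[X])
    (hJ : ∀ r ∈ J, r.comp (X - C c) ∈ J) {r : K[X]} (hr : r ∈ J) (hr0 : r ≠ 0) :
    (1 : K[X]) ∈ J := by
  induction hn : r.natDegree using Nat.strong_induction_on generalizing r with
  | _ n ih =>
    rcases Nat.eq_zero_or_pos n with rfl | hpos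
    · obtain ⟨k, rfl⟩ := natDegree_eq_zero.mp hn
      have hk : k ≠ 0 := by rintro rfl; exact hr0 C_0
      simpa [smul_C, inv_mul_cancel₀ hk] using J.smul_mem k⁻¹ hr
    · subst hn
      exact ih _ (natDegree_comp_X_sub_C_sub_lt c hpos) (J.sub_mem (hJ r hr) hr)
        (sub_ne_zero.mpr (comp_X_sub_C_ne_self hc hpos)) rfl

end Polynomial

theorem SemiconjBy.aeval {R A : Type*} [CommSemiring R] [Semiring A] [Algebra R A]
    {x y y' : A} (h : SemiconjBy x y y') (r : R[X]) : SemiconjBy x (aeval y r) (aeval y' r) := by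
  induction r using Polynomial.induction_on' with
  | add p q hp hq => simpa only [map_add] using hp.add_right hq
  | monomial n k =>
    simp only [aeval_monomial]
    exact SemiconjBy.mul_right (Algebra.commute_algebraMap_right k x) (h.pow_right n)

namespace UniversalEnvelopingAlgebra

variable {R : Type*} [CommRing R] {L : Type*} [LieRing L] [LieAlgebra R L]

instance instNontrivial [Nontrivial R] : Nontrivial (UniversalEnvelopingAlgebra R L) :=
  (lift R (0 : L →ₗ⁅R⁆ R)).toRingHom.domain_nontrivial

theorem adjoin_range_ι :
    Algebra.adjoin R (Set.range (ι R : L → UniversalEnvelopingAlgebra R L)) = ⊤ := by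
  have : Set.range (ι R : L → UniversalEnvelopingAlgebra R L) =
      mkAlgHom R L '' Set.range (TensorAlgebra.ι R) := by
    rw [← Set.range_comp]; rfl
  rw [this, Algebra.adjoin_image, TensorAlgebra.adjoin_range_ι, Algebra.map_top]
  exact (AlgHom.range_eq_top _).mpr (RingCon.mkₐ_surjective _)

@[elab_as_elim]
theorem induction_ι_mul {P : UniversalEnvelopingAlgebra R L → Prop} (one : P 1)
    (add : ∀ u v, P u → P v → P (u + v)) (smul : ∀ (k : R) u, P u → P (k • u))
    (ι_mul : ∀ (a : L) u, P u → P (ι R a * u)) (u : UniversalEnvelopingAlgebra R L) : P u := by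
  have hu : u ∈ Submodule.span R (Submonoid.closure (Set.range (ι R : L → _)) : Set _) := by
    rw [← Algebra.adjoin_eq_span, adjoin_range_ι]
    trivial
  induction hu using Submodule.span_induction with
  | mem x hx =>
    induction hx using Submonoid.closure_induction_left with
    | one => exact one
    | mul_left x hx y _ hy =>
      obtain ⟨a, rfl⟩ := hx
      exact ι_mul a y hy
  | zero => simpa using smul 0 1 one
  | add x y _ _ hx hy => exact add x y hx hy
  | smul k x _ hx => exact smul k x hx

theorem semiconjBy_ι_of_lie_eq_smul {d t : L} {c : R} (h : ⁅d, t⁆ = c • t) :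
    SemiconjBy (ι R t) (ι R d) (ι R d - algebraMap R _ c) := by
  have := congrArg (ι R) h
  rw [LieHom.map_lie, Ring.lie_def, map_smul] at this
  rw [SemiconjBy, sub_mul, ← Algebra.smul_def, ← this, sub_sub_cancel]

end UniversalEnvelopingAlgebra

noncomputable section

namespace WhittakerModel

variable {R : Type*} [CommRing R] {L : Type*} [LieRing L] [LieAlgebra R L]
  {A N : LieSubalgebra R L}

variable (A) in
def homAction : A →ₗ⁅R⁆ Module.End R (L →ₗ[R] UniversalEnvelopingAlgebra R A) where
  toFun a := LinearMap.llcomp R L _ _ (LinearMap.mulLeft R (ι R a)) -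
    LinearMap.lcomp R _ (LieAlgebra.ad R L a)
  map_add' a b := by
    ext F y
    simp only [map_add, LinearMap.add_apply, LinearMap.sub_apply, LinearMap.llcomp_apply,
      LinearMap.mulLeft_apply, LinearMap.lcomp_apply, LieAlgebra.ad_apply, AddMemClass.coe_add,
      add_mul]
    abel
  map_smul' k a := by
    ext F y
    simp only [map_smul, LinearMap.smul_apply, LinearMap.sub_apply, LinearMap.llcomp_apply,
      LinearMap.mulLeft_apply, LinearMap.lcomp_apply, LieAlgebra.ad_apply, SetLike.val_smul,
      Algebra.smul_mul_assoc, RingHom.id_apply, smul_sub]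
  map_lie' {a b} := by
    ext F y
    simp only [LieHom.map_lie, Ring.lie_def, LieSubalgebra.coe_bracket, LinearMap.sub_apply,
      LinearMap.llcomp_apply, LinearMap.mulLeft_apply, LinearMap.lcomp_apply,
      Module.End.mul_apply, LieAlgebra.ad_apply, map_sub, sub_mul, mul_sub, mul_assoc]
    abel

lemma homAction_apply (a : A) (F : L →ₗ[R] UniversalEnvelopingAlgebra R A) (y : L) :
    homAction A a F y = ι R a * F y - F ⁅(a : L), y⁆ := rfl

variable (hAN : IsCompl A.toSubmodule N.toSubmodule) (η : N →ₗ⁅R⁆ R)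

def base : L →ₗ[R] UniversalEnvelopingAlgebra R A :=
  (Algebra.linearMap R _).comp (η.toLinearMap.comp
      (N.toSubmodule.projectionOnto A.toSubmodule hAN.symm)) +
    (ι R : A →ₗ⁅R⁆ UniversalEnvelopingAlgebra R A).toLinearMap.comp
      (A.toSubmodule.projectionOnto N.toSubmodule hAN)

lemma base_apply_left (a : A) : base hAN η a = ι R a := by
  have hA : A.toSubmodule.projectionOnto N.toSubmodule hAN a = a :=
    Submodule.projectionOnto_apply_left hAN a
  simp [base, hA, Submodule.projectionOnto_apply_right hAN.symm a]

lemma base_apply_right (x : N) : base hAN η x = algebraMap R _ (η x) := by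
  have hN : N.toSubmodule.projectionOnto A.toSubmodule hAN.symm x = x :=
    Submodule.projectionOnto_apply_left hAN.symm x
  simp [base, hN, Submodule.projectionOnto_apply_right hAN x]

/- `act w y` is `y • w` for the `𝔤`-module structure on `U(𝔞)` being built: the rule
`y • (a * w) = a * (y • w) - ⁅a, y⁆ • w` says that `w ↦ (y ↦ y • w)` intertwines left
multiplication with `homAction`, so it is determined by its value `base` at `w = 1`
(`y • 1 = π_𝔞 y + η (π_𝔫 y)`), and the universal property of `U(𝔞)` makes it well defined. -/
def act : UniversalEnvelopingAlgebra R A →ₗ[R] L →ₗ[R] UniversalEnvelopingAlgebra R A :=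
  (LinearMap.applyₗ (base hAN η)).comp (lift R (homAction A)).toLinearMap

lemma act_one : act hAN η 1 = base hAN η := by
  simp [act]

lemma act_ι_mul (a : A) (w : UniversalEnvelopingAlgebra R A) (y : L) :
    act hAN η (ι R a * w) y = ι R a * act hAN η w y - act hAN η w ⁅(a : L), y⁆ := by
  simp [act, homAction_apply]

lemma act_ι (a : A) (y : L) :
    act hAN η (ι R a) y = ι R a * base hAN η y - base hAN η ⁅(a : L), y⁆ := by
  simpa [act_one] using act_ι_mul hAN η a 1 y

lemma base_lie_left (a b : A) :
    base hAN η ⁅(a : L), (b : L)⁆ = ι R a * ι R b - ι R b * ι R a := by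
  rw [← LieSubalgebra.coe_bracket, base_apply_left, LieHom.map_lie, Ring.lie_def]

lemma base_lie_right (x x' : N) : base hAN η ⁅(x : L), (x' : L)⁆ = 0 := by
  rw [← LieSubalgebra.coe_bracket, base_apply_right, LieHom.map_lie,
    (Commute.all (η x) (η x')).lie_eq, map_zero]

lemma act_one_lie (y z : L) :
    act hAN η 1 ⁅y, z⁆ = act hAN η (act hAN η 1 z) y - act hAN η (act hAN η 1 y) z := by
  have hsum : ∀ y : L, ∃ (a : A) (x : N), (a : L) + x = y := fun y =>
    Submodule.mem_sup'.mp (hAN.sup_eq_top ▸ Submodule.mem_top)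
  obtain ⟨a, x, rfl⟩ := hsum y
  obtain ⟨b, x', rfl⟩ := hsum z
  simp only [act_one, lie_add, add_lie, map_add, base_apply_left, base_apply_right,
    Algebra.algebraMap_eq_smul_one, map_smul, act_one, act_ι, LinearMap.add_apply,
    LinearMap.smul_apply, base_lie_left, base_lie_right, ← lie_skew (b : L) (x : L), map_neg,
    mul_smul_comm, mul_one, smul_comm (η x') (η x)]
  abel

lemma act_lie (w : UniversalEnvelopingAlgebra R A) (y z : L) :
    act hAN η w ⁅y, z⁆ = act hAN η (act hAN η w z) y - act hAN η (act hAN η w y) z := by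
  induction w using induction_ι_mul generalizing y z with
  | one => exact act_one_lie hAN η y z
  | add u v hu hv => simp only [map_add, LinearMap.add_apply, hu, hv]; abel
  | smul k u hu => simp only [map_smul, LinearMap.smul_apply, hu, smul_sub]
  | ι_mul a w ih =>
    rw [act_ι_mul, leibniz_lie]
    simp only [act_ι_mul, map_add, map_sub, LinearMap.sub_apply]
    rw [ih y z, ih ⁅(a : L), y⁆ z, ih y ⁅(a : L), z⁆, mul_sub]
    abel

def rep : L →ₗ⁅R⁆ Module.End R (UniversalEnvelopingAlgebra R A) :=
  { (act hAN η).flip with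
    map_lie' := fun {y z} => LinearMap.ext fun w => by
      simpa [Ring.lie_def] using act_lie hAN η w y z }

lemma rep_apply (y : L) (w : UniversalEnvelopingAlgebra R A) : rep hAN η y w = act hAN η w y :=
  rfl

lemma lift_rep_ι_sub_algebraMap_one (x : N) :
    lift R (rep hAN η) (ι R (x : L) - algebraMap R _ (η x)) 1 = 0 := by
  simp [rep_apply, act_one, base_apply_right, Algebra.algebraMap_eq_smul_one]

end WhittakerModel

end

section Whittaker

variable {L : Type*} [LieRing L] [LieAlgebra ℂ L] {N : LieSubalgebra ℂ L} {η : N →ₗ⁅ℂ⁆ ℂ}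

local notation "𝓤" => UniversalEnvelopingAlgebra ℂ L

theorem whittakerIdeal.mk_mul_ι (u : 𝓤) (x : N) :
    (Submodule.Quotient.mk (u * ι ℂ (x : L)) : 𝓤 ⧸ whittakerIdeal L N η) =
      η x • Submodule.Quotient.mk u := by
  have hx : ι ℂ (x : L) - algebraMap ℂ 𝓤 (η x) ∈ whittakerIdeal L N η :=
    Submodule.subset_span ⟨x, rfl⟩
  rw [← Submodule.Quotient.mk_smul, ← sub_eq_zero, ← Submodule.Quotient.mk_sub,
    Submodule.Quotient.mk_eq_zero, Algebra.smul_def, Algebra.commutes, ← mul_sub]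
  exact (whittakerIdeal L N η).smul_mem u hx

theorem whittakerIdeal.ι_smul_mk_aeval {t : N} {d : L} {c : ℂ} (h : ⁅d, (t : L)⁆ = c • (t : L))
    (r : ℂ[X]) :
    ι ℂ (t : L) • (Submodule.Quotient.mk (aeval (ι ℂ d) r) : 𝓤 ⧸ whittakerIdeal L N η) =
      η t • Submodule.Quotient.mk (aeval (ι ℂ d) (r.comp (X - C c))) := by
  rw [← Submodule.Quotient.mk_smul, smul_eq_mul, ((semiconjBy_ι_of_lie_eq_smul h).aeval r).eq,
    aeval_comp, map_sub, aeval_X, aeval_C, mk_mul_ι]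

variable (η) in
theorem one_notMem_whittakerIdeal {A : LieSubalgebra ℂ L}
    (hAN : IsCompl A.toSubmodule N.toSubmodule) : (1 : 𝓤) ∉ whittakerIdeal L N η := by
  have hΦ : ∀ v ∈ whittakerIdeal L N η, lift ℂ (WhittakerModel.rep hAN η) v 1 = 0 := fun v hv => by
    induction hv using Submodule.span_induction with
    | mem v hv =>
      obtain ⟨x, rfl⟩ := hv
      exact WhittakerModel.lift_rep_ι_sub_algebraMap_one hAN η x
    | zero => simp
    | add u v _ _ hu hv => simp [hu, hv]
    | smul u v _ hv => simp [hv]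
  intro h1
  simpa using hΦ 1 h1

theorem aeval_notMem_whittakerIdeal {A : LieSubalgebra ℂ L}
    (hAN : IsCompl A.toSubmodule N.toSubmodule) {t : N} {d : L} {c : ℂ}
    (h : ⁅d, (t : L)⁆ = c • (t : L)) (ht : η t ≠ 0) (hc : c ≠ 0) {r : ℂ[X]} (hr : r ≠ 0) :
    aeval (ι ℂ d) r ∉ whittakerIdeal L N η := by
  let J : Submodule ℂ ℂ[X] :=
    ((whittakerIdeal L N η).restrictScalars ℂ).comap (aeval (ι ℂ d)).toLinearMap
  have hJ : ∀ s ∈ J, s.comp (X - C c) ∈ J := fun s (hs : aeval (ι ℂ d) s ∈ _) => by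
    have hmk := whittakerIdeal.ι_smul_mk_aeval (η := η) h s
    rwa [(Submodule.Quotient.mk_eq_zero _).mpr hs, smul_zero, eq_comm,
      smul_eq_zero_iff_right ht, Submodule.Quotient.mk_eq_zero] at hmk
  intro hmem
  exact one_notMem_whittakerIdeal η hAN
    (by simpa [J] using one_mem_of_forall_comp_X_sub_C_mem hc J hJ hmem hr)

end Whittaker

/-- Let `t ∈ 𝔫`, `d ∈ 𝔤`, `c ∈ ℂ` with `⁅d,t⁆ = c•t`, let `p ∈ ℂ[X]` and
`q(X) = p(X-c) - p(X)`.  Then in `M_η`: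
`ι t • [p(ι d)] - η t • [p(ι d)] = η t • [q(ι d)]`; in particular this is `0` when
`η t = 0`.  Moreover if `𝔤 = 𝔞 ⊕ 𝔫` with `𝔞` a Lie subalgebra containing `d`, and
`η t ≠ 0`, `c ≠ 0` and `p` is nonconstant, then
`ι t • [p(ι d)] - η t • [p(ι d)] ≠ 0`. -/
theorem stmt_2 (L : Type*) [LieRing L] [LieAlgebra ℂ L]
    (N : LieSubalgebra ℂ L) (η : N →ₗ⁅ℂ⁆ ℂ)
    (t : N) (d : L) (c : ℂ) (h : ⁅d, (t : L)⁆ = c • (t : L))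
    (p q : Polynomial ℂ) (hq : q = p.comp (X - C c) - p) :
    (ι ℂ (t : L) • (Submodule.Quotient.mk (aeval (ι ℂ d) p) :
          UniversalEnvelopingAlgebra ℂ L ⧸ whittakerIdeal L N η)
        - η t • (Submodule.Quotient.mk (aeval (ι ℂ d) p) :
          UniversalEnvelopingAlgebra ℂ L ⧸ whittakerIdeal L N η)
      = η t • (Submodule.Quotient.mk (aeval (ι ℂ d) q) :
          UniversalEnvelopingAlgebra ℂ L ⧸ whittakerIdeal L N η)) ∧
    (η t = 0 →
      ι ℂ (t : L) • (Submodule.Quotient.mk (aeval (ι ℂ d) p) :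
          UniversalEnvelopingAlgebra ℂ L ⧸ whittakerIdeal L N η)
        - η t • (Submodule.Quotient.mk (aeval (ι ℂ d) p) :
          UniversalEnvelopingAlgebra ℂ L ⧸ whittakerIdeal L N η) = 0) ∧
    (∀ A : LieSubalgebra ℂ L, IsCompl A.toSubmodule N.toSubmodule → d ∈ A →
      η t ≠ 0 → c ≠ 0 → 0 < p.natDegree →
      ι ℂ (t : L) • (Submodule.Quotient.mk (aeval (ι ℂ d) p) :
          UniversalEnvelopingAlgebra ℂ L ⧸ whittakerIdeal L N η)
        - η t • (Submodule.Quotient.mk (aeval (ι ℂ d) p) :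
          UniversalEnvelopingAlgebra ℂ L ⧸ whittakerIdeal L N η) ≠ 0) := by
  have hdiff : ι ℂ (t : L) • (Submodule.Quotient.mk (aeval (ι ℂ d) p) :
        UniversalEnvelopingAlgebra ℂ L ⧸ whittakerIdeal L N η) - η t • Submodule.Quotient.mk
        (aeval (ι ℂ d) p) = η t • Submodule.Quotient.mk (aeval (ι ℂ d) q) := by
    rw [whittakerIdeal.ι_smul_mk_aeval h, hq, map_sub, Submodule.Quotient.mk_sub, smul_sub]
  refine ⟨hdiff, fun ht => by rw [hdiff, ht, zero_smul], fun A hAN _ ht hc hp => ?_⟩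
  rw [hdiff, Ne, smul_eq_zero_iff_right ht, Submodule.Quotient.mk_eq_zero]
  exact aeval_notMem_whittakerIdeal hAN h ht hc
    (hq ▸ sub_ne_zero.mpr (comp_X_sub_C_ne_self hc hp))
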